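/- For a class K of τ-algebras, the following are equivalent: (1) K is a variety of τ-algebras; (2) K = Mod(Th(K)); (3) K = K△▽ and K△ is a variety of infinitary clone τ-algebras. -/

import Mathlib

/-! ### τ-algebras (homogeneous type: every symbol of arity ω) -/

/-- `α` is a homomorphism of τ-algebras from `(A, FA)` to `(B, FB)`. -/
def IsAlgHom {τ A B : Type} (FA : τ → (ℕ → A) → A) (FB : τ → (ℕ → B) → B)
    (α : A → B) : Prop :=
  ∀ f s, α (FA f s) = FB f (fun i => α (s i))

/-! ### Infinitary clone τ-algebras -/

/-- The data of an infinitary clone τ-algebra on carrier `C`. -/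
structure CloneData (τ C : Type) where
  e : ℕ → C
  F : τ → C
  q : C → (ℕ → C) → C

/-- Axioms (N1)–(N3) of infinitary clone τ-algebras. -/
def IsCloneAlg {τ C : Type} (d : CloneData τ C) : Prop :=
  (∀ (i : ℕ) (s : ℕ → C), d.q (d.e i) s = s i) ∧
  (∀ x : C, d.q x d.e = x) ∧
  (∀ (x : C) (y z : ℕ → C), d.q (d.q x y) z = d.q x (fun i => d.q (y i) z))

/-- Homomorphisms of infinitary clone τ-algebras. -/
def IsCloneHom {τ C D : Type} (dC : CloneData τ C) (dD : CloneData τ D)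
    (α : C → D) : Prop :=
  (∀ i, α (dC.e i) = dD.e i) ∧
  (∀ f, α (dC.F f) = dD.F f) ∧
  (∀ x s, α (dC.q x s) = dD.q (α x) (fun i => α (s i)))

/-- Subuniverses of an infinitary clone τ-algebra. -/
def IsCloneSubuniv {τ C : Type} (d : CloneData τ C) (S : Set C) : Prop :=
  (∀ i, d.e i ∈ S) ∧ (∀ f, d.F f ∈ S) ∧
  (∀ (a : C) (s : ℕ → C), a ∈ S → (∀ i, s i ∈ S) → d.q a s ∈ S)

/-- The full functional infinitary clone τ-algebra `O^(ω)_A` on the value domain `(A, FA)`. -/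
def fullCloneData {τ : Type} (A : Type) (FA : τ → (ℕ → A) → A) :
    CloneData τ ((ℕ → A) → A) where
  e i := fun s => s i
  F f := FA f
  q g h := fun s => g (fun i => h i s)

/-- The τ-algebra `C↓` associated with an infinitary clone τ-algebra. -/
def downOp {τ C : Type} (d : CloneData τ C) : τ → (ℕ → C) → C :=
  fun f s => d.q (d.F f) s

/-- The clone structure induced on a subuniverse. -/
def subCloneData {τ C : Type} (d : CloneData τ C) {S : Set C}
    (h : IsCloneSubuniv d S) : CloneData τ S where
  e i := ⟨d.e i, h.1 i⟩
  F f := ⟨d.F f, h.2.1 f⟩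
  q a s := ⟨d.q a.1 (fun i => (s i).1), h.2.2 _ _ a.2 (fun i => (s i).2)⟩

/-! ### Terms -/

/-- τ-terms over the variables `e 0, e 1, …`. -/
inductive Term (τ : Type) : Type
  | e : ℕ → Term τ
  | app : τ → (ℕ → Term τ) → Term τ

/-- Term operation of a τ-term on the τ-algebra `(A, FA)`. -/
def Term.eval {τ A : Type} (FA : τ → (ℕ → A) → A) : Term τ → (ℕ → A) → A
  | .e i, s => s i
  | .app f t, s => FA f (fun i => (t i).eval FA s)

/-- Simultaneous substitution of terms for variables. -/
def Term.subst {τ : Type} : Term τ → (ℕ → Term τ) → Term τ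
  | .e i, u => u i
  | .app f t, u => .app f (fun i => (t i).subst u)

theorem Term.eval_subst {τ A : Type} (FA : τ → (ℕ → A) → A) :
    ∀ (t : Term τ) (u : ℕ → Term τ) (s : ℕ → A),
      (t.subst u).eval FA s = t.eval FA (fun i => (u i).eval FA s)
  | .e _, _, _ => rfl
  | .app f t, u, s => by
      simp only [Term.subst, Term.eval]
      congr 1
      funext i
      exact Term.eval_subst FA (t i) u s

/-- The initial infinitary clone τ-algebra `N_τ̄` on the set of τ-terms. -/
def initData (τ : Type) : CloneData τ (Term τ) where
  e := Term.e
  F f := Term.app f Term.e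
  q := Term.subst

/-- The term infinitary clone τ-algebra `A↑` (as a clone structure on the set
of term operations of `A`). -/
def upData {τ A : Type} (FA : τ → (ℕ → A) → A) :
    CloneData τ {g : (ℕ → A) → A // ∃ t : Term τ, g = Term.eval FA t} where
  e i := ⟨fun s => s i, ⟨Term.e i, rfl⟩⟩
  F f := ⟨FA f, ⟨Term.app f Term.e, by funext s; rfl⟩⟩
  q g h := ⟨fun s => g.1 (fun i => (h i).1 s), by
    obtain ⟨t, ht⟩ := g.2
    refine ⟨t.subst (fun i => (h i).2.choose), ?_⟩
    funext s
    rw [Term.eval_subst, ← ht]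
    exact congrArg _ (funext fun i => by rw [← (h i).2.choose_spec])⟩

/-! ### Bundled algebras, varieties -/

/-- A bundled τ-algebra. -/
structure Alg (τ : Type) : Type 1 where
  carrier : Type
  op : τ → (ℕ → carrier) → carrier

/-- Subuniverses of a τ-algebra. -/
def IsSubuniv {τ : Type} (A : Alg τ) (S : Set A.carrier) : Prop :=
  ∀ f s, (∀ i, s i ∈ S) → A.op f s ∈ S

/-- The subalgebra on a subuniverse. -/
def subAlg {τ : Type} (A : Alg τ) (S : Set A.carrier) (h : IsSubuniv A S) : Alg τ :=
  ⟨S, fun f s => ⟨A.op f (fun i => (s i).1), h f _ (fun i => (s i).2)⟩⟩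

/-- Product of τ-algebras, with componentwise operations. -/
def prodAlg {τ I : Type} (A : I → Alg τ) : Alg τ :=
  ⟨∀ i, (A i).carrier, fun f s i => (A i).op f (fun n => s n i)⟩

/-- Power of a τ-algebra. -/
def powAlg {τ : Type} (A : Alg τ) (I : Type) : Alg τ := prodAlg (fun _ : I => A)

/-- A variety: a class of τ-algebras closed under homomorphic images,
subalgebras (together with isomorphic copies), and arbitrary products. -/
def IsVariety {τ : Type} (K : Alg τ → Prop) : Prop :=
  (∀ A B : Alg τ, K A →
    (∃ α : A.carrier → B.carrier, Function.Surjective α ∧ IsAlgHom A.op B.op α) → K B) ∧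
  (∀ A B : Alg τ, K A →
    (∃ α : B.carrier → A.carrier, Function.Injective α ∧ IsAlgHom B.op A.op α) → K B) ∧
  (∀ (I : Type) (A : I → Alg τ), (∀ i, K (A i)) → K (prodAlg A))

/-- The subuniverse generated by a subset. -/
def gen {τ : Type} (A : Alg τ) (X : Set A.carrier) : Set A.carrier :=
  ⋂₀ {S | IsSubuniv A S ∧ X ⊆ S}

theorem gen_subuniv {τ : Type} (A : Alg τ) (X : Set A.carrier) :
    IsSubuniv A (gen A X) := by
  intro f s hs
  rw [gen, Set.mem_sInter]
  intro S hS
  exact hS.1 f s (fun i => Set.mem_sInter.1 (hs i) S hS)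

/-- The subalgebra generated by a subset. -/
def genSubalg {τ : Type} (A : Alg τ) (X : Set A.carrier) : Alg τ :=
  subAlg A (gen A X) (gen_subuniv A X)

/-! ### Bundled infinitary clone algebras -/

/-- A bundled infinitary clone τ-algebra. -/
structure CAlg (τ : Type) : Type 1 where
  carrier : Type
  data : CloneData τ carrier
  isClone : IsCloneAlg data

/-- Componentwise product of clone data. -/
def prodCloneData {τ I : Type} {C : I → Type} (d : ∀ i, CloneData τ (C i)) :
    CloneData τ (∀ i, C i) where
  e n := fun i => (d i).e n
  F f := fun i => (d i).F f
  q a s := fun i => (d i).q (a i) (fun n => s n i)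

theorem prodCloneData_isClone {τ I : Type} {C : I → Type} (d : ∀ i, CloneData τ (C i))
    (h : ∀ i, IsCloneAlg (d i)) : IsCloneAlg (prodCloneData d) := by
  refine ⟨?_, ?_, ?_⟩
  · intro n s; funext i; exact (h i).1 n (fun m => s m i)
  · intro x; funext i; exact (h i).2.1 (x i)
  · intro x y z; funext i; exact (h i).2.2 (x i) (fun n => y n i) (fun n => z n i)

/-- Product of infinitary clone τ-algebras. -/
def prodCAlg {τ I : Type} (Cs : I → CAlg τ) : CAlg τ :=
  ⟨∀ i, (Cs i).carrier, prodCloneData (fun i => (Cs i).data),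
    prodCloneData_isClone _ (fun i => (Cs i).isClone)⟩

/-- A variety of infinitary clone τ-algebras. -/
def IsCloneVariety {τ : Type} (H : CAlg τ → Prop) : Prop :=
  (∀ C D : CAlg τ, H C →
    (∃ α : C.carrier → D.carrier, Function.Surjective α ∧ IsCloneHom C.data D.data α) → H D) ∧
  (∀ C D : CAlg τ, H C →
    (∃ α : D.carrier → C.carrier, Function.Injective α ∧ IsCloneHom D.data C.data α) → H D) ∧
  (∀ (I : Type) (Cs : I → CAlg τ), (∀ i, H (Cs i)) → H (prodCAlg Cs))

/-! ### The operators △ and ▽ -/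

/-- `K△`: clone algebras isomorphic to a subalgebra of `O^(ω)_A` for some `A ∈ K`. -/
def Tri {τ : Type} (K : Alg τ → Prop) (D : CAlg τ) : Prop :=
  ∃ A : Alg τ, K A ∧ ∃ α : D.carrier → ((ℕ → A.carrier) → A.carrier),
    Function.Injective α ∧ IsCloneHom D.data (fullCloneData A.carrier A.op) α

/-- `H▽`: τ-algebras isomorphic to some `A` having a functional infinitary clone
τ-algebra on value domain `A` belonging to `H`. -/
def Nabla {τ : Type} (H : CAlg τ → Prop) (B : Alg τ) : Prop :=
  ∃ A : Alg τ,
    (∃ α : B.carrier → A.carrier, Function.Bijective α ∧ IsAlgHom B.op A.op α) ∧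
    ∃ D : CAlg τ, H D ∧ ∃ β : D.carrier → ((ℕ → A.carrier) → A.carrier),
      Function.Injective β ∧ IsCloneHom D.data (fullCloneData A.carrier A.op) β

/-! ### Equational theories -/

/-- The equational theory of a class of τ-algebras. -/
def ThK {τ : Type} (K : Alg τ → Prop) : Set (Term τ × Term τ) :=
  {p | ∀ A : Alg τ, K A → Term.eval A.op p.1 = Term.eval A.op p.2}

/-- The class of models of a set of identities. -/
def ModClass {τ : Type} (Sg : Set (Term τ × Term τ)) : Alg τ → Prop :=
  fun A => ∀ p ∈ Sg, Term.eval A.op p.1 = Term.eval A.op p.2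

/-! ### HSP -/

/-- `B` is a homomorphic image of a subalgebra of a power of `A`. -/
def InHSP {τ : Type} (A B : Alg τ) : Prop :=
  ∃ (I : Type) (S : Set (powAlg A I).carrier) (h : IsSubuniv (powAlg A I) S)
    (α : (subAlg (powAlg A I) S h).carrier → B.carrier),
    Function.Surjective α ∧ IsAlgHom (subAlg (powAlg A I) S h).op B.op α

/-- `B` is a homomorphic image of a subalgebra of a finite power of `A`. -/
def InHSPFin {τ : Type} (A B : Alg τ) : Prop :=
  ∃ (n : ℕ) (S : Set (powAlg A (Fin n)).carrier) (h : IsSubuniv (powAlg A (Fin n)) S)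
    (α : (subAlg (powAlg A (Fin n)) S h).carrier → B.carrier),
    Function.Surjective α ∧ IsAlgHom (subAlg (powAlg A (Fin n)) S h).op B.op α

/-! ### Finite dimensionality -/

/-- An ω-ary operation has finite dimension. -/
def FinDimOp {A : Type} (g : (ℕ → A) → A) : Prop :=
  ∃ n : ℕ, ∀ s u : ℕ → A, (∀ i < n, s i = u i) → g s = g u

/-- A τ-algebra is finite-dimensional if all its term operations have finite dimension. -/
def FinDimAlg {τ : Type} (A : Alg τ) : Prop :=
  ∀ t : Term τ, FinDimOp (Term.eval A.op t)


/-!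
A variety `K` is recovered from its functional clone algebras: a clone algebra `D` lies in `K△`
exactly when its associated τ-algebra `D↓` lies in `K`, because `D` embeds into `O^(ω)_{D↓}` by
`x ↦ q(x, -)`, while an embedding of `D` into `O^(ω)_A` is a τ-embedding of `D↓` into `A^(A^ω)`.
Hence `K△` inherits the closure properties of `K`. Conversely, if `D` embeds into `O^(ω)_A`,
evaluation at each `s ∈ A^ω` maps `D↓` onto the subalgebra generated by `s`, and `A` is the
countably directed union of these, so `A ∈ K`; thus `K = K△▽`.

For `(3) ⇒ (2)`, let `A ⊨ Th(K)`. Separating each non-identity of `K` in some member of `K`, the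
term clone maps into a product of full clones `O^(ω)_B` with `B ∈ K`; its image lies in `K△`,
and, since every identity it satisfies holds in `A`, so does the clone of term operations of `A`,
a functional clone on `A`. So `A ∈ K△▽ = K`, and `Mod(Th(K))` is always a variety.
-/

variable {τ : Type}

theorem IsAlgHom.map_eval {A B : Type} {FA : τ → (ℕ → A) → A} {FB : τ → (ℕ → B) → B}
    {α : A → B} (h : IsAlgHom FA FB α) :
    ∀ (t : Term τ) (s : ℕ → A), α (t.eval FA s) = t.eval FB (fun i => α (s i))
  | .e _, _ => rfl
  | .app f t, s => by
      simp only [Term.eval, h f]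
      congr 1
      funext i
      exact h.map_eval (t i) s

theorem isAlgHom_apply_prodAlg {I : Type} (A : I → Alg τ) (i : I) :
    IsAlgHom (prodAlg A).op (A i).op (fun g => g i) :=
  fun _ _ => rfl

theorem IsAlgHom.isSubuniv_range {A B : Alg τ} {φ : B.carrier → A.carrier}
    (h : IsAlgHom B.op A.op φ) : IsSubuniv A (Set.range φ) := by
  intro f s hs
  choose b hb using hs
  exact ⟨B.op f b, by rw [h f b]; simp only [hb]⟩

theorem IsVariety.range_mem {K : Alg τ → Prop} (hV : IsVariety K) {A B : Alg τ} (hB : K B)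
    {φ : B.carrier → A.carrier} (h : IsAlgHom B.op A.op φ) :
    K (subAlg A (Set.range φ) h.isSubuniv_range) :=
  hV.1 B _ hB ⟨fun x => ⟨φ x, x, rfl⟩, fun ⟨_, x, hx⟩ => ⟨x, Subtype.ext hx⟩,
    fun f s => Subtype.ext (h f s)⟩

theorem modClass_isVariety (Sg : Set (Term τ × Term τ)) : IsVariety (ModClass Sg) := by
  refine ⟨?_, ?_, ?_⟩
  · rintro A B hA ⟨α, hα, hhom⟩ p hp
    funext s
    obtain ⟨s', rfl⟩ := hα.comp_left s
    simp only [Function.comp_def, ← hhom.map_eval, hA p hp]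
  · rintro A B hA ⟨α, hα, hhom⟩ p hp
    funext s
    apply hα
    rw [hhom.map_eval, hhom.map_eval, hA p hp]
  · intro I A hA p hp
    funext s i
    rw [(isAlgHom_apply_prodAlg A i).map_eval, (isAlgHom_apply_prodAlg A i).map_eval, hA i p hp]

theorem le_modClass_thK (K : Alg τ → Prop) {A : Alg τ} (hA : K A) : ModClass (ThK K) A :=
  fun _ hp => hp A hA

section DirectedUnion

variable {α ι : Type} {E : ι → Set α}

/-- The thread `g` eventually takes the value `a`, for the preorder `E i ⊆ E j` on indices. -/
def IsThreadLimit (E : ι → Set α) (g : ∀ i, E i) (a : α) : Prop :=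
  ∃ i₀, a ∈ E i₀ ∧ ∀ i, E i₀ ⊆ E i → (g i : α) = a

theorem IsThreadLimit.unique (hdir : ∀ i j, ∃ k, E i ⊆ E k ∧ E j ⊆ E k) {g : ∀ i, E i}
    {a b : α} (ha : IsThreadLimit E g a) (hb : IsThreadLimit E g b) : a = b := by
  obtain ⟨i, -, hi⟩ := ha
  obtain ⟨j, -, hj⟩ := hb
  obtain ⟨k, hik, hjk⟩ := hdir i j
  rw [← hi k hik, hj k hjk]

theorem isThreadLimit_op {A : Alg τ} {E : ι → Set A.carrier} (hsub : ∀ i, IsSubuniv A (E i))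
    (hdir : ∀ c : ℕ → ι, ∃ j, ∀ n, E (c n) ⊆ E j) (f : τ)
    {t : ℕ → (prodAlg fun i => subAlg A (E i) (hsub i)).carrier} {a : ℕ → A.carrier}
    (ht : ∀ n, IsThreadLimit E (t n) (a n)) :
    IsThreadLimit E ((prodAlg fun i => subAlg A (E i) (hsub i)).op f t) (A.op f a) := by
  choose i₀ ha hta using ht
  obtain ⟨j, hj⟩ := hdir i₀
  refine ⟨j, hsub j f a fun n => hj n (ha n), fun i hji => ?_⟩
  show A.op f (fun n => (t n i).1) = A.op f a
  congr 1
  funext n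
  exact hta n i ((hj n).trans hji)

/-- `A` is the image of the algebra of threads in `∏ E i` that have a limit. -/
theorem IsVariety.mem_of_directed_cover {K : Alg τ → Prop} (hV : IsVariety K) (A : Alg τ)
    (E : ι → Set A.carrier) (hsub : ∀ i, IsSubuniv A (E i)) (hne : ∀ i, (E i).Nonempty)
    (hcov : ∀ a, ∃ i, a ∈ E i) (hdir : ∀ c : ℕ → ι, ∃ j, ∀ n, E (c n) ⊆ E j)
    (hK : ∀ i, K (subAlg A (E i) (hsub i))) : K A := by
  classical
  have hdir₂ : ∀ i j, ∃ k, E i ⊆ E k ∧ E j ⊆ E k := fun i j => by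
    obtain ⟨k, hk⟩ := hdir fun n => if n = 0 then i else j
    exact ⟨k, by simpa using hk 0, by simpa using hk 1⟩
  set P := prodAlg fun i => subAlg A (E i) (hsub i)
  have hS : IsSubuniv P {g | ∃ a, IsThreadLimit E g a} := fun f t ht =>
    ⟨_, isThreadLimit_op hsub hdir f fun n => (ht n).choose_spec⟩
  set Q := subAlg P _ hS
  have hQ : K Q := hV.2.1 P Q (hV.2.2 _ _ hK) ⟨Subtype.val, Subtype.val_injective, fun _ _ => rfl⟩
  refine hV.1 Q A hQ ⟨fun g => g.2.choose, fun b => ?_, fun f t => ?_⟩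
  · obtain ⟨i₀, hb⟩ := hcov b
    let g : P.carrier := fun i => if h : b ∈ E i then ⟨b, h⟩ else ⟨_, (hne i).some_mem⟩
    have hg : IsThreadLimit E g b := ⟨i₀, hb, fun i hi => by simp [g, hi hb]⟩
    exact ⟨⟨g, b, hg⟩, IsThreadLimit.unique hdir₂ (Exists.choose_spec _) hg⟩
  · exact IsThreadLimit.unique hdir₂ (Exists.choose_spec _)
      (isThreadLimit_op hsub hdir f fun n => (t n).2.choose_spec)

end DirectedUnion

section CloneAlgebras

theorem isCloneAlg_full (A : Type) (FA : τ → (ℕ → A) → A) : IsCloneAlg (fullCloneData A FA) :=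
  ⟨fun _ _ => rfl, fun _ => rfl, fun _ _ _ => rfl⟩

theorem IsCloneSubuniv.isCloneAlg {C : Type} {d : CloneData τ C} {S : Set C}
    (h : IsCloneSubuniv d S) (hd : IsCloneAlg d) : IsCloneAlg (subCloneData d h) :=
  ⟨fun i _ => Subtype.ext (hd.1 i _), fun _ => Subtype.ext (hd.2.1 _),
    fun _ _ _ => Subtype.ext (hd.2.2 _ _ _)⟩

def fullCAlg (A : Alg τ) : CAlg τ :=
  ⟨_, fullCloneData A.carrier A.op, isCloneAlg_full _ _⟩

def subCAlg (D : CAlg τ) {S : Set D.carrier} (h : IsCloneSubuniv D.data S) : CAlg τ :=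
  ⟨S, subCloneData D.data h, h.isCloneAlg D.isClone⟩

def downAlg (D : CAlg τ) : Alg τ := ⟨D.carrier, downOp D.data⟩

theorem isCloneHom_id {C : Type} (d : CloneData τ C) : IsCloneHom d d id :=
  ⟨fun _ => rfl, fun _ => rfl, fun _ _ => rfl⟩

theorem isCloneHom_subtype_val {C : Type} (d : CloneData τ C) {S : Set C}
    (h : IsCloneSubuniv d S) : IsCloneHom (subCloneData d h) d Subtype.val :=
  ⟨fun _ => rfl, fun _ => rfl, fun _ _ => rfl⟩

variable {C D E : Type} {dC : CloneData τ C} {dD : CloneData τ D} {dE : CloneData τ E}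

theorem IsCloneHom.pi {I : Type} {Ds : I → Type} {d : ∀ i, CloneData τ (Ds i)}
    {φ : ∀ i, C → Ds i} (h : ∀ i, IsCloneHom dC (d i) (φ i)) :
    IsCloneHom dC (prodCloneData d) (fun x i => φ i x) :=
  ⟨fun n => funext fun i => (h i).1 n, fun f => funext fun i => (h i).2.1 f,
    fun x s => funext fun i => (h i).2.2 x s⟩

theorem IsCloneHom.isAlgHom_downOp {φ : C → D} (h : IsCloneHom dC dD φ) :
    IsAlgHom (downOp dC) (downOp dD) φ := fun f s => by
  show φ (dC.q (dC.F f) s) = dD.q (dD.F f) _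
  rw [h.2.2, h.2.1]

theorem IsCloneHom.isAlgHom_apply {A : Type} {FA : τ → (ℕ → A) → A} {β : C → (ℕ → A) → A}
    (h : IsCloneHom dC (fullCloneData A FA) β) (s : ℕ → A) :
    IsAlgHom (downOp dC) FA (fun x => β x s) :=
  fun f x => congrFun (h.isAlgHom_downOp f x) s

theorem IsCloneHom.isCloneSubuniv_range {φ : C → D} (h : IsCloneHom dC dD φ) :
    IsCloneSubuniv dD (Set.range φ) := by
  refine ⟨fun i => ⟨dC.e i, h.1 i⟩, fun f => ⟨dC.F f, h.2.1 f⟩, ?_⟩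
  rintro _ s ⟨x, rfl⟩ hs
  choose y hy using hs
  exact ⟨dC.q x y, by rw [h.2.2]; simp only [hy]⟩

theorem IsCloneHom.exists_surjective_range_of_ker_le {Φ : C → D} {Ψ : C → E}
    (hΦ : IsCloneHom dC dD Φ) (hΨ : IsCloneHom dC dE Ψ) (hker : ∀ x y, Φ x = Φ y → Ψ x = Ψ y) :
    ∃ α : Set.range Φ → Set.range Ψ, Function.Surjective α ∧
      IsCloneHom (subCloneData dD hΦ.isCloneSubuniv_range)
        (subCloneData dE hΨ.isCloneSubuniv_range) α := by
  choose g hg using fun y : Set.range Φ => y.2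
  have key : ∀ y x, Φ x = y.1 → Ψ (g y) = Ψ x := fun y x h => hker _ _ ((hg y).trans h.symm)
  refine ⟨fun y => ⟨Ψ (g y), g y, rfl⟩, ?_, fun i => ?_, fun f => ?_, fun y s => ?_⟩
  · rintro ⟨_, x, rfl⟩
    exact ⟨⟨Φ x, x, rfl⟩, Subtype.ext (key _ x rfl)⟩
  · exact Subtype.ext ((key _ _ (hΦ.1 i)).trans (hΨ.1 i))
  · exact Subtype.ext ((key _ _ (hΦ.2.1 f)).trans (hΨ.2.1 f))
  · refine Subtype.ext ((key _ (dC.q (g y) fun i => g (s i)) ?_).trans (hΨ.2.2 _ _))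
    show Φ _ = dD.q y.1 fun i => (s i).1
    simp only [hΦ.2.2, hg]

theorem isCloneHom_q {d : CloneData τ C} (hd : IsCloneAlg d) :
    IsCloneHom d (fullCloneData C (downOp d)) d.q :=
  ⟨fun i => funext (hd.1 i), fun _ => rfl, fun x s => funext (hd.2.2 x s)⟩

theorem injective_q {d : CloneData τ C} (hd : IsCloneAlg d) : Function.Injective d.q :=
  fun x y h => by rw [← hd.2.1 x, ← hd.2.1 y, h]

theorem isCloneHom_eval (A : Type) (FA : τ → (ℕ → A) → A) :
    IsCloneHom (initData τ) (fullCloneData A FA) (Term.eval FA) :=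
  ⟨fun _ => rfl, fun _ => rfl, fun t u => funext (Term.eval_subst FA t u)⟩

end CloneAlgebras

section TriNabla

variable {K : Alg τ → Prop}

theorem fullCAlg_mem_tri {A : Alg τ} (hA : K A) : Tri K (fullCAlg A) :=
  ⟨A, hA, id, Function.injective_id, isCloneHom_id _⟩

theorem tri_iff_downAlg (hV : IsVariety K) (D : CAlg τ) : Tri K D ↔ K (downAlg D) := by
  constructor
  · rintro ⟨A, hA, β, hβ, hhom⟩
    exact hV.2.1 (powAlg A _) _ (hV.2.2 _ _ fun _ => hA) ⟨β, hβ, hhom.isAlgHom_downOp⟩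
  · exact fun hD => ⟨downAlg D, hD, D.data.q, injective_q D.isClone, isCloneHom_q D.isClone⟩

theorem tri_isCloneVariety (hV : IsVariety K) : IsCloneVariety (Tri K) := by
  simp only [IsCloneVariety, tri_iff_downAlg hV]
  refine ⟨?_, ?_, fun I Cs hCs => hV.2.2 I (fun i => downAlg (Cs i)) hCs⟩
  · rintro C D hC ⟨φ, hφ, hhom⟩
    exact hV.1 _ _ hC ⟨φ, hφ, hhom.isAlgHom_downOp⟩
  · rintro C D hC ⟨φ, hφ, hhom⟩
    exact hV.2.1 _ _ hC ⟨φ, hφ, hhom.isAlgHom_downOp⟩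

theorem mem_of_cloneHom_full (hV : IsVariety K) {D : CAlg τ} (hD : Tri K D) {A : Alg τ}
    {β : D.carrier → (ℕ → A.carrier) → A.carrier}
    (hβ : IsCloneHom D.data (fullCloneData A.carrier A.op) β) : K A := by
  have hproj : ∀ i s, β (D.data.e i) s = s i := fun i s => congrFun (hβ.1 i) s
  refine hV.mem_of_directed_cover A (fun s => Set.range fun x => β x s)
    (fun s => IsAlgHom.isSubuniv_range (B := downAlg D) (hβ.isAlgHom_apply s))
    (fun s => ⟨_, D.data.e 0, hproj 0 s⟩) (fun a => ⟨fun _ => a, D.data.e 0, hproj 0 _⟩)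
    (fun c => ⟨fun m => c m.unpair.1 m.unpair.2, ?_⟩)
    (fun s => hV.range_mem ((tri_iff_downAlg hV D).1 hD) (hβ.isAlgHom_apply s))
  -- the image at the interleaving of countably many `c n` contains each of theirs
  rintro n _ ⟨x, rfl⟩
  refine ⟨D.data.q x fun i => D.data.e (Nat.pair n i), ?_⟩
  simp only [hβ.2.2, fullCloneData, hproj, Nat.unpair_pair]

theorem eq_nabla_tri (hV : IsVariety K) : K = Nabla (Tri K) := by
  funext B
  refine propext ⟨fun hB => ?_, ?_⟩
  · exact ⟨B, ⟨id, Function.bijective_id, fun _ _ => rfl⟩, fullCAlg B, fullCAlg_mem_tri hB,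
      id, Function.injective_id, isCloneHom_id _⟩
  · rintro ⟨A, ⟨α, hα, hhom⟩, D, hD, β, -, hβ⟩
    exact hV.2.1 A B (mem_of_cloneHom_full hV hD hβ) ⟨α, hα.1, hhom⟩

theorem nabla_tri_of_modClass_thK (hH : IsCloneVariety (Tri K)) {A : Alg τ}
    (hA : ModClass (ThK K) A) : Nabla (Tri K) A := by
  have hsep : ∀ p : {p // p ∉ ThK K}, ∃ B : Alg τ, K B ∧
      Term.eval B.op p.1.1 ≠ Term.eval B.op p.1.2 := fun p => by
    simpa [ThK] using p.2
  choose B hBK hB using hsep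
  set P := prodCAlg fun p => fullCAlg (B p)
  have hP : Tri K P := hH.2.2 _ _ fun p => fullCAlg_mem_tri (hBK p)
  have hΦ : IsCloneHom (initData τ) P.data (fun t p => Term.eval (B p).op t) :=
    IsCloneHom.pi fun p => isCloneHom_eval _ _
  have hΨ := isCloneHom_eval A.carrier A.op
  have hker : ∀ t u, (fun p => Term.eval (B p).op t) = (fun p => Term.eval (B p).op u) →
      Term.eval A.op t = Term.eval A.op u := fun t u h => by
    by_contra hne
    exact hB ⟨(t, u), fun hp => hne (hA _ hp)⟩ (congrFun h _)
  obtain ⟨α, hαs, hα⟩ := hΦ.exists_surjective_range_of_ker_le hΨ hker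
  have hrange : Tri K (subCAlg P hΦ.isCloneSubuniv_range) :=
    hH.2.1 P _ hP
      ⟨Subtype.val, Subtype.val_injective, isCloneHom_subtype_val _ hΦ.isCloneSubuniv_range⟩
  exact ⟨A, ⟨id, Function.bijective_id, fun _ _ => rfl⟩,
    subCAlg (fullCAlg A) hΨ.isCloneSubuniv_range, hH.1 _ _ hrange ⟨α, hαs, hα⟩,
    Subtype.val, Subtype.val_injective, isCloneHom_subtype_val _ hΨ.isCloneSubuniv_range⟩

theorem eq_modClass_thK_of_eq_nabla_tri (hK : K = Nabla (Tri K)) (hH : IsCloneVariety (Tri K)) :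
    K = ModClass (ThK K) := by
  funext A
  refine propext ⟨le_modClass_thK K, fun hA => ?_⟩
  rw [hK]
  exact nabla_tri_of_modClass_thK hH hA

end TriNabla

theorem stmt14 (τ : Type) (K : Alg τ → Prop) :
    (IsVariety K ↔ K = ModClass (ThK K)) ∧
    (IsVariety K ↔ (K = Nabla (Tri K) ∧ IsCloneVariety (Tri K))) := by
  have h13 : IsVariety K → K = Nabla (Tri K) ∧ IsCloneVariety (Tri K) :=
    fun hV => ⟨eq_nabla_tri hV, tri_isCloneVariety hV⟩
  have h32 : K = Nabla (Tri K) ∧ IsCloneVariety (Tri K) → K = ModClass (ThK K) :=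
    fun h => eq_modClass_thK_of_eq_nabla_tri h.1 h.2
  have h21 : K = ModClass (ThK K) → IsVariety K := fun h => h ▸ modClass_isVariety _
  exact ⟨⟨h32 ∘ h13, h21⟩, ⟨h13, h21 ∘ h32⟩⟩
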